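/- arXiv:gr-qc/0401126 — 4 statements merged into one kernel-verified Lean document; each statement's English description precedes it below -/
import Mathlib

section
/- Let (M,d_M) and (N,d_N) be sets with Lorentz distances and finite strong metrics D_M, D_N, and suppose ψ : M → N and ζ : N → M make them (ε,δ)-close. Then the Gromov–Hausdorff distance between the metric spaces (M,D_M) and (N,D_N) is at most ε + 3δ/2. In particular, the metric D on the disjoint union M ⊔ N defined by restricting to D_M and D_N on each part and setting D(p,q) = (ε+δ) + min over r∈M, s∈N of ½(D_M(p,r) + D_N(ψ(r),q) + D_N(q,s) + D_M(ζ(s),p)) for p∈M, q∈N, is an admissible metric satisfying the triangle inequality, with D(p,ψ(p)) ≤ ε + 3δ/2 and D(q,ζ(q)) ≤ ε + 3δ/2. -/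
/-- if `ψ, ζ` make `(M,d_M)` and `(N,d_N)` `(ε,δ)`-close, then the
Gromov–Hausdorff distance between the strong metric spaces `(M,D_M)` and
`(N,D_N)` is at most `ε + 3δ/2`: there is an admissible metric `D'` on the
disjoint union `M ⊔ N`, given on mixed pairs by
`D'(p,q) = (ε+δ) + inf_{r∈M, s∈N} ½(D_M(p,r) + D_N(ψ(r),q) + D_N(q,s) + D_M(ζ(s),p))`,
which is symmetric, satisfies the triangle inequality, restricts to `D_M` and
`D_N`, and satisfies `D'(p,ψ(p)) ≤ ε + 3δ/2` and `D'(q,ζ(q)) ≤ ε + 3δ/2`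
(hence each point of either space is within `ε + 3δ/2` of the other space). -/
theorem gromovHausdorff_bound_of_close {M N : Type*} [Nonempty M] [Nonempty N]
    (dM DM : M → M → ℝ) (dN DN : N → N → ℝ)
    (hMnonneg : ∀ x y, 0 ≤ dM x y) (hMdiag : ∀ x, dM x x = 0)
    (hManti : ∀ x y, 0 < dM x y → dM y x = 0)
    (hMrev : ∀ x y z, 0 < dM x y → 0 < dM y z → dM x y + dM y z ≤ dM x z)
    (hNnonneg : ∀ x y, 0 ≤ dN x y) (hNdiag : ∀ x, dN x x = 0)
    (hNanti : ∀ x y, 0 < dN x y → dN y x = 0)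
    (hNrev : ∀ x y z, 0 < dN x y → 0 < dN y z → dN x y + dN y z ≤ dN x z)
    (hDM : ∀ p q, IsLUB (Set.range fun r => |dM p r + dM r p - dM q r - dM r q|) (DM p q))
    (hDN : ∀ p q, IsLUB (Set.range fun r => |dN p r + dN r p - dN q r - dN r q|) (DN p q))
    (hDMsep : ∀ p q, DM p q = 0 → p = q)
    (hDNsep : ∀ p q, DN p q = 0 → p = q)
    (ε δ : ℝ) (hε : 0 ≤ ε) (hδ : 0 ≤ δ) (ψ : M → N) (ζ : N → M)
    (hψ : ∀ p₁ p₂, |dN (ψ p₁) (ψ p₂) - dM p₁ p₂| ≤ ε)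
    (hζ : ∀ q₁ q₂, |dM (ζ q₁) (ζ q₂) - dN q₁ q₂| ≤ ε)
    (hζψ : ∀ p, DM p (ζ (ψ p)) ≤ δ)
    (hψζ : ∀ q, DN q (ψ (ζ q)) ≤ δ) :
    ∃ D' : M ⊕ N → M ⊕ N → ℝ,
      (∀ p q : M, D' (Sum.inl p) (Sum.inl q) = DM p q) ∧
      (∀ p q : N, D' (Sum.inr p) (Sum.inr q) = DN p q) ∧
      (∀ x y, D' x y = D' y x) ∧
      (∀ x y z, D' x z ≤ D' x y + D' y z) ∧
      (∀ (p : M) (q : N), D' (Sum.inl p) (Sum.inr q) =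
        (ε + δ) + sInf {x : ℝ | ∃ (r : M) (s : N),
          x = (DM p r + DN (ψ r) q + DN q s + DM (ζ s) p) / 2}) ∧
      (∀ p : M, D' (Sum.inl p) (Sum.inr (ψ p)) ≤ ε + 3 * δ / 2) ∧
      (∀ q : N, D' (Sum.inr q) (Sum.inl (ζ q)) ≤ ε + 3 * δ / 2) ∧
      (∀ p : M, ∃ q : N, D' (Sum.inl p) (Sum.inr q) ≤ ε + 3 * δ / 2) ∧
      (∀ q : N, ∃ p : M, D' (Sum.inr q) (Sum.inl p) ≤ ε + 3 * δ / 2) := by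
  obtain ⟨p₀⟩ := ‹Nonempty M›
  obtain ⟨q₀⟩ := ‹Nonempty N›
  -- basic facts about the strong metric `DM`
  have DMmem : ∀ p q r, |dM p r + dM r p - dM q r - dM r q| ≤ DM p q :=
    fun p q r => (hDM p q).1 ⟨r, rfl⟩
  have DMle : ∀ p q (c : ℝ), (∀ r, |dM p r + dM r p - dM q r - dM r q| ≤ c) → DM p q ≤ c :=
    fun p q c h => (hDM p q).2 (by rintro _ ⟨r, rfl⟩; exact h r)
  have DMnonneg : ∀ p q, 0 ≤ DM p q := fun p q => le_trans (abs_nonneg _) (DMmem p q p)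
  have DMsymm : ∀ p q, DM p q = DM q p := by
    have h : ∀ p q : M, DM p q ≤ DM q p := by
      intro p q
      refine DMle p q _ fun r => ?_
      have h := abs_le.mp (DMmem q p r)
      rw [abs_le]; constructor <;> linarith [h.1, h.2]
    exact fun p q => le_antisymm (h p q) (h q p)
  have DMtri : ∀ p y z, DM p z ≤ DM p y + DM y z := by
    intro p y z
    refine DMle p z _ fun r => ?_
    have h1 := abs_le.mp (DMmem p y r); have h2 := abs_le.mp (DMmem y z r)
    rw [abs_le]; constructor <;> linarith [h1.1, h1.2, h2.1, h2.2]
  have DMself : ∀ p, DM p p = 0 := by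
    intro p
    refine le_antisymm (DMle p p _ fun r => ?_) (DMnonneg p p)
    rw [show dM p r + dM r p - dM p r - dM r p = 0 by ring, abs_zero]
  -- basic facts about the strong metric `DN`
  have DNmem : ∀ p q r, |dN p r + dN r p - dN q r - dN r q| ≤ DN p q :=
    fun p q r => (hDN p q).1 ⟨r, rfl⟩
  have DNle : ∀ p q (c : ℝ), (∀ r, |dN p r + dN r p - dN q r - dN r q| ≤ c) → DN p q ≤ c :=
    fun p q c h => (hDN p q).2 (by rintro _ ⟨r, rfl⟩; exact h r)
  have DNnonneg : ∀ p q, 0 ≤ DN p q := fun p q => le_trans (abs_nonneg _) (DNmem p q p)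
  have DNsymm : ∀ p q, DN p q = DN q p := by
    have h : ∀ p q : N, DN p q ≤ DN q p := by
      intro p q
      refine DNle p q _ fun r => ?_
      have h := abs_le.mp (DNmem q p r)
      rw [abs_le]; constructor <;> linarith [h.1, h.2]
    exact fun p q => le_antisymm (h p q) (h q p)
  have DNtri : ∀ p y z, DN p z ≤ DN p y + DN y z := by
    intro p y z
    refine DNle p z _ fun r => ?_
    have h1 := abs_le.mp (DNmem p y r); have h2 := abs_le.mp (DNmem y z r)
    rw [abs_le]; constructor <;> linarith [h1.1, h1.2, h2.1, h2.2]
  have DNself : ∀ p, DN p p = 0 := by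
    intro p
    refine le_antisymm (DNle p p _ fun r => ?_) (DNnonneg p p)
    rw [show dN p r + dN r p - dN p r - dN r p = 0 by ring, abs_zero]
  -- key antisymmetry lemma: symmetrized Lorentz distances are distorted by only ε
  have sumψ : ∀ x y, |dN (ψ x) (ψ y) + dN (ψ y) (ψ x) - dM x y - dM y x| ≤ ε := by
    intro x y
    have h1 := abs_le.mp (hψ x y); have h2 := abs_le.mp (hψ y x)
    rw [abs_le]; constructor
    · rcases le_or_gt (dM x y) (dN (ψ x) (ψ y)) with h | h
      · linarith [h2.1]
      · have hpos : 0 < dM x y := lt_of_le_of_lt (hNnonneg (ψ x) (ψ y)) h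
        have h0 := hManti x y hpos
        linarith [h1.1, hNnonneg (ψ y) (ψ x)]
    · rcases le_or_gt (dN (ψ x) (ψ y)) (dM x y) with h | h
      · linarith [h2.2]
      · have hpos : 0 < dN (ψ x) (ψ y) := lt_of_le_of_lt (hMnonneg x y) h
        have h0 := hNanti _ _ hpos
        linarith [h1.2, hMnonneg y x]
  have sumζ : ∀ x y, |dM (ζ x) (ζ y) + dM (ζ y) (ζ x) - dN x y - dN y x| ≤ ε := by
    intro x y
    have h1 := abs_le.mp (hζ x y); have h2 := abs_le.mp (hζ y x)
    rw [abs_le]; constructor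
    · rcases le_or_gt (dN x y) (dM (ζ x) (ζ y)) with h | h
      · linarith [h2.1]
      · have hpos : 0 < dN x y := lt_of_le_of_lt (hMnonneg (ζ x) (ζ y)) h
        have h0 := hNanti x y hpos
        linarith [h1.1, hMnonneg (ζ y) (ζ x)]
    · rcases le_or_gt (dM (ζ x) (ζ y)) (dN x y) with h | h
      · linarith [h2.2]
      · have hpos : 0 < dM (ζ x) (ζ y) := lt_of_le_of_lt (hNnonneg x y) h
        have h0 := hManti _ _ hpos
        linarith [h1.2, hNnonneg y x]
  -- moving by `ζ ∘ ψ` or `ψ ∘ ζ` costs at most δ on symmetrized pairs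
  have δmoveN : ∀ q t, |dN q t + dN t q - dN (ψ (ζ q)) t - dN t (ψ (ζ q))| ≤ δ :=
    fun q t => le_trans (DNmem q (ψ (ζ q)) t) (hψζ q)
  have δmoveM : ∀ r b, |dM r b + dM b r - dM (ζ (ψ r)) b - dM b (ζ (ψ r))| ≤ δ :=
    fun r b => le_trans (DMmem r (ζ (ψ r)) b) (hζψ r)
  -- comparison lemmas
  have key2 : ∀ s b, |dM (ζ s) b + dM b (ζ s) - dN s (ψ b) - dN (ψ b) s| ≤ ε + δ := by
    intro s b
    have h1 := abs_le.mp (sumψ (ζ s) b)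
    have h2 := abs_le.mp (δmoveN s (ψ b))
    rw [abs_le]; constructor <;> linarith [h1.1, h1.2, h2.1, h2.2]
  have key3 : ∀ r s, DM r (ζ s) ≤ DN (ψ r) s + (2 * ε + δ) := by
    intro r s
    refine DMle r (ζ s) _ fun b => ?_
    have h1 := abs_le.mp (sumψ r b)
    have h2 := abs_le.mp (key2 s b)
    have h3 := abs_le.mp (DNmem (ψ r) s (ψ b))
    rw [abs_le]; constructor <;> linarith [h1.1, h1.2, h2.1, h2.2, h3.1, h3.2]
  have key4 : ∀ r t, |dN (ψ r) t + dN t (ψ r) - dM r (ζ t) - dM (ζ t) r| ≤ ε + δ := by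
    intro r t
    have h1 := abs_le.mp (sumζ (ψ r) t)
    have h2 := abs_le.mp (δmoveM r (ζ t))
    rw [abs_le]; constructor <;> linarith [h1.1, h1.2, h2.1, h2.2]
  have key6 : ∀ s r', DN s (ψ r') ≤ DM (ζ s) r' + (2 * ε + δ) := by
    intro s r'
    refine DNle s (ψ r') _ fun t => ?_
    have h1 := abs_le.mp (sumζ s t)
    have h2 := abs_le.mp (key4 r' t)
    have h3 := abs_le.mp (DMmem (ζ s) r' (ζ t))
    rw [abs_le]; constructor <;> linarith [h1.1, h1.2, h2.1, h2.2, h3.1, h3.2]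
  -- facts about the mixed-distance infimum
  have Sbdd : ∀ (p : M) (q : N), BddBelow {x : ℝ | ∃ (r : M) (s : N),
      x = (DM p r + DN (ψ r) q + DN q s + DM (ζ s) p) / 2} := by
    intro p q
    refine ⟨0, ?_⟩
    rintro x ⟨r, s, rfl⟩
    have := DMnonneg p r; have := DNnonneg (ψ r) q
    have := DNnonneg q s; have := DMnonneg (ζ s) p
    linarith
  have Sne : ∀ (p : M) (q : N), Set.Nonempty {x : ℝ | ∃ (r : M) (s : N),
      x = (DM p r + DN (ψ r) q + DN q s + DM (ζ s) p) / 2} :=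
    fun p q => ⟨_, p₀, q₀, rfl⟩
  have sInfle : ∀ (p : M) (q : N) (r : M) (s : N),
      sInf {x : ℝ | ∃ (r : M) (s : N), x = (DM p r + DN (ψ r) q + DN q s + DM (ζ s) p) / 2}
        ≤ (DM p r + DN (ψ r) q + DN q s + DM (ζ s) p) / 2 :=
    fun p q r s => csInf_le (Sbdd p q) ⟨r, s, rfl⟩
  have lesInf : ∀ (p : M) (q : N) (c : ℝ),
      (∀ (r : M) (s : N), c ≤ (DM p r + DN (ψ r) q + DN q s + DM (ζ s) p) / 2) →
      c ≤ sInf {x : ℝ | ∃ (r : M) (s : N),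
        x = (DM p r + DN (ψ r) q + DN q s + DM (ζ s) p) / 2} := by
    intro p q c h
    refine le_csInf (Sne p q) ?_
    rintro x ⟨r, s, rfl⟩
    exact h r s
  have sInfnonneg : ∀ (p : M) (q : N), 0 ≤
      sInf {x : ℝ | ∃ (r : M) (s : N), x = (DM p r + DN (ψ r) q + DN q s + DM (ζ s) p) / 2} := by
    intro p q
    refine lesInf p q 0 fun r s => ?_
    have := DMnonneg p r; have := DNnonneg (ψ r) q
    have := DNnonneg q s; have := DMnonneg (ζ s) p
    linarith
  -- shifting the M-argument or N-argument of the mixed distance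
  have shiftM : ∀ (p p' : M) (q : N),
      sInf {x : ℝ | ∃ (r : M) (s : N), x = (DM p r + DN (ψ r) q + DN q s + DM (ζ s) p) / 2}
        ≤ DM p p' +
      sInf {x : ℝ | ∃ (r : M) (s : N), x = (DM p' r + DN (ψ r) q + DN q s + DM (ζ s) p') / 2} := by
    intro p p' q
    have h := lesInf p' q
      (sInf {x : ℝ | ∃ (r : M) (s : N), x = (DM p r + DN (ψ r) q + DN q s + DM (ζ s) p) / 2}
        - DM p p') ?_
    · linarith
    · intro r s
      have h0 := sInfle p q r s
      have t1 := DMtri p p' r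
      have t2 := DMtri (ζ s) p' p
      have e1 := DMsymm p' p
      linarith
  have shiftN : ∀ (p : M) (q q' : N),
      sInf {x : ℝ | ∃ (r : M) (s : N), x = (DM p r + DN (ψ r) q + DN q s + DM (ζ s) p) / 2}
        ≤ DN q q' +
      sInf {x : ℝ | ∃ (r : M) (s : N), x = (DM p r + DN (ψ r) q' + DN q' s + DM (ζ s) p) / 2} := by
    intro p q q'
    have h := lesInf p q'
      (sInf {x : ℝ | ∃ (r : M) (s : N), x = (DM p r + DN (ψ r) q + DN q s + DM (ζ s) p) / 2}
        - DN q q') ?_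
    · linarith
    · intro r s
      have h0 := sInfle p q r s
      have t1 := DNtri (ψ r) q' q
      have t2 := DNtri q q' s
      have e1 := DNsymm q q'
      linarith
  -- the two hard triangle inequalities
  have triMNM : ∀ (p p' : M) (q : N), DM p p' ≤
      ((ε + δ) + sInf {x : ℝ | ∃ (r : M) (s : N),
        x = (DM p r + DN (ψ r) q + DN q s + DM (ζ s) p) / 2}) +
      ((ε + δ) + sInf {x : ℝ | ∃ (r : M) (s : N),
        x = (DM p' r + DN (ψ r) q + DN q s + DM (ζ s) p') / 2}) := by
    intro p p' q
    have h := lesInf p' q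
      (DM p p' - 2 * (ε + δ) - sInf {x : ℝ | ∃ (r : M) (s : N),
        x = (DM p r + DN (ψ r) q + DN q s + DM (ζ s) p) / 2}) ?_
    · linarith
    · intro r' s'
      have h2 := lesInf p q
        (DM p p' - 2 * (ε + δ) - (DM p' r' + DN (ψ r') q + DN q s' + DM (ζ s') p') / 2) ?_
      · linarith
      · intro r s
        -- core estimate
        have h1 : DM p p' ≤ DM p r + DM r (ζ s') + DM (ζ s') p' := by
          have := DMtri p r (ζ s'); have := DMtri p (ζ s') p'; linarith
        have h4 : DM p p' ≤ DM p (ζ s) + DM (ζ s) r' + DM r' p' := by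
          have := DMtri p (ζ s) r'; have := DMtri p r' p'; linarith
        have k1 := key3 r s'
        have k2 := key3 r' s
        have t1 := DNtri (ψ r) q s'
        have t2 := DNtri (ψ r') q s
        have e1 := DMsymm (ζ s) p
        have e2 := DMsymm (ζ s) r'
        have e3 := DMsymm p' r'
        linarith
  have triNMN : ∀ (q q' : N) (p : M), DN q q' ≤
      ((ε + δ) + sInf {x : ℝ | ∃ (r : M) (s : N),
        x = (DM p r + DN (ψ r) q + DN q s + DM (ζ s) p) / 2}) +
      ((ε + δ) + sInf {x : ℝ | ∃ (r : M) (s : N),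
        x = (DM p r + DN (ψ r) q' + DN q' s + DM (ζ s) p) / 2}) := by
    intro q q' p
    have h := lesInf p q'
      (DN q q' - 2 * (ε + δ) - sInf {x : ℝ | ∃ (r : M) (s : N),
        x = (DM p r + DN (ψ r) q + DN q s + DM (ζ s) p) / 2}) ?_
    · linarith
    · intro r' s'
      have h2 := lesInf p q
        (DN q q' - 2 * (ε + δ) - (DM p r' + DN (ψ r') q' + DN q' s' + DM (ζ s') p) / 2) ?_
      · linarith
      · intro r s
        have h1 : DN q q' ≤ DN q s + DN s (ψ r') + DN (ψ r') q' := by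
          have := DNtri q s (ψ r'); have := DNtri q (ψ r') q'; linarith
        have h4 : DN q q' ≤ DN q (ψ r) + DN (ψ r) s' + DN s' q' := by
          have := DNtri q (ψ r) s'; have := DNtri q s' q'; linarith
        have k1 := key6 s r'
        have k2 := key6 s' r
        have t1 := DMtri (ζ s) p r'
        have t2 := DMtri (ζ s') p r
        have e1 := DNsymm q (ψ r)
        have e2 := DNsymm (ψ r) s'
        have e3 := DNsymm s' q'
        have e4 := DMsymm p r
        have e5 := DMsymm p r'
        linarith
  -- closeness bounds
  have boundψ : ∀ p : M, (ε + δ) + sInf {x : ℝ | ∃ (r : M) (s : N),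
      x = (DM p r + DN (ψ r) (ψ p) + DN (ψ p) s + DM (ζ s) p) / 2} ≤ ε + 3 * δ / 2 := by
    intro p
    have h := sInfle p (ψ p) p (ψ p)
    have e1 := DMself p
    have e2 := DNself (ψ p)
    have e3 := DMsymm (ζ (ψ p)) p
    have e4 := hζψ p
    linarith
  have boundζ : ∀ q : N, (ε + δ) + sInf {x : ℝ | ∃ (r : M) (s : N),
      x = (DM (ζ q) r + DN (ψ r) q + DN q s + DM (ζ s) (ζ q)) / 2} ≤ ε + 3 * δ / 2 := by
    intro q
    have h := sInfle (ζ q) q (ζ q) q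
    have e1 := DMself (ζ q)
    have e2 := DNself q
    have e3 := DNsymm (ψ (ζ q)) q
    have e4 := hψζ q
    linarith
  -- assemble
  refine ⟨fun x y => match x, y with
    | Sum.inl p, Sum.inl q => DM p q
    | Sum.inr p, Sum.inr q => DN p q
    | Sum.inl p, Sum.inr q => (ε + δ) + sInf {x : ℝ | ∃ (r : M) (s : N),
        x = (DM p r + DN (ψ r) q + DN q s + DM (ζ s) p) / 2}
    | Sum.inr q, Sum.inl p => (ε + δ) + sInf {x : ℝ | ∃ (r : M) (s : N),
        x = (DM p r + DN (ψ r) q + DN q s + DM (ζ s) p) / 2},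
    fun p q => rfl, fun p q => rfl, ?_, ?_, fun p q => rfl, boundψ, boundζ,
    fun p => ⟨ψ p, boundψ p⟩, fun q => ⟨ζ q, boundζ q⟩⟩
  · -- symmetry
    rintro (p | q) (p' | q')
    · exact DMsymm p p'
    · rfl
    · rfl
    · exact DNsymm q q'
  · -- triangle inequality
    rintro (p | q) (p' | q') (p'' | q'')
    · exact DMtri p p' p''
    · -- L L R
      have := shiftM p p' q''
      linarith
    · -- L R L : p, q', p''
      exact triMNM p p'' q'
    · -- L R R : p, q', q''
      have := shiftN p q'' q'
      have e := DNsymm q'' q'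
      linarith
    · -- R L L : q, p', p''
      have := shiftM p'' p' q
      have e := DMsymm p'' p'
      linarith
    · -- R L R : q, p', q''
      exact triNMN q q'' p'
    · -- R R L : q, q', p''
      have := shiftN p'' q q'
      linarith
    · exact DNtri q q' q''
end

section
/- Let (M,d) be a set with Lorentz distance d and strong metric D. Every open D-ball B_D(r,ε) is causally convex: if p, q ∈ B_D(r,ε) with d(p,q) > 0, and x satisfies d(p,x) > 0 and d(x,q) > 0, then x ∈ B_D(r,ε). -/
/-- open balls of the strong metric `D` are causally convex:
if `p, q ∈ B_D(r,ε)` with `p ≪ q` (i.e. `d p q > 0`), and `p ≪ x ≪ q`,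
then `x ∈ B_D(r,ε)`. -/
theorem strong_metric_balls_causally_convex {M : Type*} (d D : M → M → ℝ)
    (hnonneg : ∀ x y, 0 ≤ d x y)
    (hdiag : ∀ x, d x x = 0)
    (hanti : ∀ x y, 0 < d x y → d y x = 0)
    (hrev : ∀ x y z, 0 < d x y → 0 < d y z → d x y + d y z ≤ d x z)
    (hD : ∀ p q, IsLUB (Set.range fun r => |d p r + d r p - d q r - d r q|) (D p q)) :
    ∀ (r : M) (ε : ℝ) (p q x : M),
      D r p < ε → D r q < ε → 0 < d p q → 0 < d p x → 0 < d x q →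
      D r x < ε := by
  intro r ε p q x hrp hrq hpq hpx hxq
  have bp : ∀ s, |d r s + d s r - d p s - d s p| ≤ D r p :=
    fun s => (hD r p).1 (Set.mem_range_self s)
  have bq : ∀ s, |d r s + d s r - d q s - d s q| ≤ D r q :=
    fun s => (hD r q).1 (Set.mem_range_self s)
  set m := max (D r p) (D r q) with hm
  have hmε : m < ε := max_lt hrp hrq
  have hm0 : 0 ≤ m := le_trans (abs_nonneg _) ((bp r).trans (le_max_left _ _))
  -- d p r + d r p ≤ D r p
  have hpr : d p r + d r p ≤ D r p := by
    have h := abs_le.mp (bp r)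
    have := hdiag r
    linarith [h.1]
  have hqr : d q r + d r q ≤ D r q := by
    have h := abs_le.mp (bq r)
    have := hdiag r
    linarith [h.1]
  have key : ∀ s, |d r s + d s r - d x s - d s x| ≤ m := by
    intro s
    have hbp := abs_le.mp (bp s)
    have hbq := abs_le.mp (bq s)
    have hmp : D r p ≤ m := le_max_left _ _
    have hmq : D r q ≤ m := le_max_right _ _
    rw [abs_le]
    constructor
    · -- d x s + d s x - d r s - d s r ≤ m, i.e. G x s ≤ G r s + m
      by_cases h1 : 0 < d x s
      · have h2 : d s x = 0 := hanti _ _ h1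
        have h3 : d p x + d x s ≤ d p s := hrev _ _ _ hpx h1
        have h4 : d s p = 0 := by
          by_contra h4
          have h4' : 0 < d s p := lt_of_le_of_ne (hnonneg s p) (Ne.symm h4)
          have := hrev _ _ _ h4' hpx
          linarith [hnonneg s p, hnonneg p x]
        -- G x s = d x s ≤ d p s = G p s, and G p s - G r s ≤ D r p
        linarith [hbp.1, hnonneg p x]
      · by_cases h1' : 0 < d s x
        · have h2 : d x s = 0 := hanti _ _ h1'
          have h3 : d s x + d x q ≤ d s q := hrev _ _ _ h1' hxq
          have h4 : d q s = 0 := by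
            by_contra h4
            have h4' : 0 < d q s := lt_of_le_of_ne (hnonneg q s) (Ne.symm h4)
            have := hrev _ _ _ h4' h1'
            have := hanti _ _ hxq
            linarith [hnonneg q s, hnonneg s x]
          linarith [hbq.1, hnonneg x q]
        · have e1 : d x s = 0 := le_antisymm (not_lt.mp h1) (hnonneg x s)
          have e2 : d s x = 0 := le_antisymm (not_lt.mp h1') (hnonneg s x)
          linarith [hnonneg r s, hnonneg s r]
    · -- - m ≤ d x s + d s x - d r s - d s r, i.e. G r s ≤ G x s + m
      by_cases h1 : 0 < d r s
      · have h2 : d s r = 0 := hanti _ _ h1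
        by_cases h3 : 0 < d s q
        · have h4 := hrev _ _ _ h1 h3
          linarith [hnonneg x s, hnonneg s x, hqr, hnonneg q r]
        · by_cases h5 : 0 < d q s
          · have h6 : d s q = 0 := le_antisymm (not_lt.mp h3) (hnonneg s q)
            have h7 : d x q + d q s ≤ d x s := hrev _ _ _ hxq h5
            have h8 : 0 < d x s := by linarith [hnonneg x q]
            have h9 : d s x = 0 := hanti _ _ h8
            -- d r s ≤ G q s + D r q = d q s + D r q ≤ d x s - d x q + D r q
            linarith [hbq.2, hnonneg x q]
          · have h6 : d s q = 0 := le_antisymm (not_lt.mp h3) (hnonneg s q)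
            have h7 : d q s = 0 := le_antisymm (not_lt.mp h5) (hnonneg q s)
            linarith [hbq.2, hnonneg x s, hnonneg s x]
      · by_cases h1' : 0 < d s r
        · have h2 : d r s = 0 := le_antisymm (not_lt.mp h1) (hnonneg r s)
          by_cases h3 : 0 < d p s
          · have h4 := hrev _ _ _ h3 h1'
            linarith [hnonneg x s, hnonneg s x, hpr, hnonneg r p]
          · by_cases h5 : 0 < d s p
            · have h6 : d p s = 0 := le_antisymm (not_lt.mp h3) (hnonneg p s)
              have h7 : d s p + d p x ≤ d s x := hrev _ _ _ h5 hpx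
              have h8 : 0 < d s x := by linarith [hnonneg p x]
              have h9 : d x s = 0 := hanti _ _ h8
              linarith [hbp.2, hnonneg p x]
            · have h6 : d p s = 0 := le_antisymm (not_lt.mp h3) (hnonneg p s)
              have h7 : d s p = 0 := le_antisymm (not_lt.mp h5) (hnonneg s p)
              linarith [hbp.2, hnonneg x s, hnonneg s x]
        · have e1 : d r s = 0 := le_antisymm (not_lt.mp h1) (hnonneg r s)
          have e2 : d s r = 0 := le_antisymm (not_lt.mp h1') (hnonneg s r)
          linarith [hnonneg x s, hnonneg s x]
  have hDx : D r x ≤ m := by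
    apply (hD r x).2
    rintro v ⟨s, rfl⟩
    exact key s
  linarith
end

section
/- Let (M, d) be a Lorentz space (so the strong metric D makes M compact). Every isometry ψ of (M,d) (i.e. d(ψ(p),ψ(q)) = d(p,q) for all p,q) is a bijection of M. -/
/-- A self-map of a compact metric space that does not decrease distances hits,
for every point and every `ε`, an iterate close to the point (simultaneously for
two points). -/
lemma expansive_iterate_close {M : Type*} [MetricSpace M] [CompactSpace M]
    (f : M → M) (h : ∀ p q, dist p q ≤ dist (f p) (f q)) (p q : M)
    {ε : ℝ} (hε : 0 < ε) : ∃ k, 1 ≤ k ∧ dist p (f^[k] p) < ε ∧ dist q (f^[k] q) < ε := by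
  have hiter : ∀ n (a b : M), dist a b ≤ dist (f^[n] a) (f^[n] b) := by
    intro n
    induction n with
    | zero => simp
    | succ n ih =>
      intro a b
      simpa [Function.iterate_succ_apply] using (h a b).trans (ih (f a) (f b))
  set u : ℕ → M × M := fun n => (f^[n] p, f^[n] q) with hu
  obtain ⟨x, -, φ, hφ, hx⟩ :=
    isCompact_univ.tendsto_subseq (x := u) (fun n => Set.mem_univ _)
  rw [Metric.tendsto_atTop] at hx
  obtain ⟨N, hN⟩ := hx (ε / 2) (by linarith)
  have h1 := hN N le_rfl
  have h2 := hN (N + 1) (Nat.le_succ _)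
  have hmn : φ N < φ (N + 1) := hφ (Nat.lt_succ_self N)
  refine ⟨φ (N + 1) - φ N, by omega, ?_, ?_⟩
  · have : dist p (f^[φ (N+1) - φ N] p) ≤
        dist (f^[φ N] p) (f^[φ N] (f^[φ (N+1) - φ N] p)) := hiter _ _ _
    rw [← Function.iterate_add_apply] at this
    have hadd : φ N + (φ (N+1) - φ N) = φ (N + 1) := by omega
    rw [hadd] at this
    have hd : dist (f^[φ N] p) (f^[φ (N+1)] p) ≤
        dist (u (φ N)) (u (φ (N+1))) := le_max_left _ _
    calc dist p (f^[φ (N+1) - φ N] p) ≤ dist (u (φ N)) (u (φ (N+1))) := this.trans hd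
      _ ≤ dist (u (φ N)) x + dist x (u (φ (N+1))) := dist_triangle _ _ _
      _ < ε / 2 + ε / 2 := by
          have := h2
          rw [dist_comm x] at *
          exact add_lt_add h1 h2
      _ = ε := by ring
  · have : dist q (f^[φ (N+1) - φ N] q) ≤
        dist (f^[φ N] q) (f^[φ N] (f^[φ (N+1) - φ N] q)) := hiter _ _ _
    rw [← Function.iterate_add_apply] at this
    have hadd : φ N + (φ (N+1) - φ N) = φ (N + 1) := by omega
    rw [hadd] at this
    have hd : dist (f^[φ N] q) (f^[φ (N+1)] q) ≤
        dist (u (φ N)) (u (φ (N+1))) := le_max_right _ _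
    calc dist q (f^[φ (N+1) - φ N] q) ≤ dist (u (φ N)) (u (φ (N+1))) := this.trans hd
      _ ≤ dist (u (φ N)) x + dist x (u (φ (N+1))) := dist_triangle _ _ _
      _ < ε / 2 + ε / 2 := by
          rw [dist_comm x] at *
          exact add_lt_add h1 h2
      _ = ε := by ring

/-- A self-map of a compact metric space that does not decrease distances is a
bijection. -/
lemma expansive_bijective {M : Type*} [MetricSpace M] [CompactSpace M]
    (f : M → M) (h : ∀ p q, dist p q ≤ dist (f p) (f q)) : Function.Bijective f := by
  have hinj : Function.Injective f := by
    intro a b hab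
    have := h a b
    rw [hab, dist_self] at this
    exact dist_le_zero.mp this
  -- f is in fact an isometry
  have hiso : ∀ p q, dist (f p) (f q) = dist p q := by
    intro p q
    refine le_antisymm ?_ (h p q)
    refine le_of_forall_pos_le_add fun ε hε => ?_
    obtain ⟨k, hk1, hp, hq⟩ := expansive_iterate_close f h p q (half_pos hε)
    obtain ⟨j, rfl⟩ := Nat.exists_eq_add_of_le hk1
    have hiter : ∀ n (a b : M), dist a b ≤ dist (f^[n] a) (f^[n] b) := by
      intro n
      induction n with
      | zero => simp
      | succ n ih =>
        intro a b
        simpa [Function.iterate_succ_apply] using (h a b).trans (ih (f a) (f b))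
    have h1 : dist (f p) (f q) ≤ dist (f^[1+j] p) (f^[1+j] q) := by
      have := hiter j (f p) (f q)
      simpa [Function.iterate_succ_apply, Nat.add_comm 1 j,
        Function.iterate_add_apply] using this
    calc dist (f p) (f q) ≤ dist (f^[1+j] p) (f^[1+j] q) := h1
      _ ≤ dist (f^[1+j] p) p + dist p q + dist q (f^[1+j] q) :=
          dist_triangle4 _ _ _ _
      _ ≤ ε/2 + dist p q + ε/2 := by
          rw [dist_comm (f^[1+j] p) p]
          linarith
      _ = dist p q + ε := by ring
  have hcont : Continuous f := (Isometry.of_dist_eq hiso).continuous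
  have hclosed : IsClosed (Set.range f) := by
    have : IsCompact (Set.range f) := isCompact_range hcont
    exact this.isClosed
  have hdense : Dense (Set.range f) := by
    intro x
    rw [Metric.mem_closure_iff]
    intro ε hε
    obtain ⟨k, hk1, hp, -⟩ := expansive_iterate_close f h x x hε
    obtain ⟨j, rfl⟩ := Nat.exists_eq_add_of_le hk1
    exact ⟨f^[1+j] x, ⟨f^[j] x, by rw [Nat.add_comm, Function.iterate_succ_apply']⟩, hp⟩
  have : Set.range f = Set.univ := by
    rw [← hclosed.closure_eq]
    exact hdense.closure_eq
  exact ⟨hinj, Set.range_eq_univ.mp this⟩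

/-- every `d`-isometry of a Lorentz space (a set with a Lorentz
distance whose strong metric makes it a compact metric space) is a bijection. -/
theorem lorentz_isometry_bijective {M : Type*} [MetricSpace M] [CompactSpace M]
    (d : M → M → ℝ)
    (hnonneg : ∀ x y, 0 ≤ d x y)
    (hdiag : ∀ x, d x x = 0)
    (hanti : ∀ x y, 0 < d x y → d y x = 0)
    (hrev : ∀ x y z, 0 < d x y → 0 < d y z → d x y + d y z ≤ d x z)
    (hD : ∀ p q, IsLUB (Set.range fun r => |d p r + d r p - d q r - d r q|) (dist p q))
    (ψ : M → M) (hψ : ∀ p q, d (ψ p) (ψ q) = d p q) :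
    Function.Bijective ψ := by
  apply expansive_bijective
  intro p q
  -- dist p q is the LUB of values which all appear in the defining family for (ψ p, ψ q)
  refine (hD p q).2 ?_
  rintro v ⟨r, rfl⟩
  show |d p r + d r p - d q r - d r q| ≤ _
  have : |d p r + d r p - d q r - d r q| =
      |d (ψ p) (ψ r) + d (ψ r) (ψ p) - d (ψ q) (ψ r) - d (ψ r) (ψ q)| := by
    rw [hψ, hψ, hψ, hψ]
  rw [this]
  exact (hD (ψ p) (ψ q)).1 ⟨ψ r, rfl⟩
end

section
/- Let (M,d) be a Lorentz space that is a path metric Lorentz space with witnesses only for chronologically related pairs, with respect to a closed partial order relation ≺ containing ≪ (such as the K⁺ relation). Build ≺ by transfinite induction from ≪ by closing under transitivity and topological closure. If for every pair p ≪ q there exists a ≺-causal curve from p to q, and the Vietoris limit of ≺-causal curves is a ≺-causal curve, then for every pair p ≺ q there exists a ≺-causal curve from p to q. (Induction step version: if the property holds at stage β of the transfinite construction, it holds at stage β+1, where stage β+1 adds pairs implied by transitivity or by taking limits of pairs.) -/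
/-- path metricity with respect to the `K⁺` relation.  Let `prec`
be the smallest topologically closed transitive relation containing the
chronological relation `chron` on a compact metric Lorentz space `M` (the `K⁺`
relation), and let `Joined p q` mean that there is a continuous `prec`-causal
curve from `p` to `q`.  If every chronologically related pair is joined by a
causal curve, causal curves can be concatenated, and limits (in the Vietoris
sense, here expressed via converging endpoints) of causal curves are causal
curves, then every pair `p ≺ q` is joined by a causal curve. -/
theorem Kplus_path_connected {M : Type*} [MetricSpace M] [CompactSpace M]
    (chron prec : M → M → Prop)
    (hsub : ∀ a b, chron a b → prec a b)
    (htrans : ∀ a b c, prec a b → prec b c → prec a c)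
    (hclosed : IsClosed {pq : M × M | prec pq.1 pq.2})
    (hmin : ∀ R : M → M → Prop, IsClosed {pq : M × M | R pq.1 pq.2} →
      (∀ a b c, R a b → R b c → R a c) → (∀ a b, chron a b → R a b) →
      ∀ a b, prec a b → R a b)
    (Joined : M → M → Prop)
    (hJoined : ∀ p q, Joined p q ↔ ∃ (a b : ℝ) (γ : ℝ → M), a ≤ b ∧
      ContinuousOn γ (Set.Icc a b) ∧ γ a = p ∧ γ b = q ∧
      ∀ t s, a ≤ t → t < s → s ≤ b → prec (γ t) (γ s))
    (hchron : ∀ p q, chron p q → Joined p q)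
    (hconcat : ∀ p q r, Joined p q → Joined q r → Joined p r)
    (hlimit : ∀ (p q : M) (pn qn : ℕ → M), (∀ n, Joined (pn n) (qn n)) →
      Filter.Tendsto pn Filter.atTop (nhds p) →
      Filter.Tendsto qn Filter.atTop (nhds q) → Joined p q) :
    ∀ p q, prec p q → Joined p q := by
  have hJc : IsClosed {pq : M × M | Joined pq.1 pq.2} := by
    apply IsSeqClosed.isClosed
    intro x p hx hlim
    exact hlimit p.1 p.2 (fun n => (x n).1) (fun n => (x n).2) hx
      ((continuous_fst.tendsto p).comp hlim)
      ((continuous_snd.tendsto p).comp hlim)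
  exact hmin Joined hJc hconcat hchron
end
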